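/- arXiv:2105.08114 — 8 statements merged into one kernel-verified Lean document; each statement's English description precedes it below -/
import Mathlib

section
/- For every real number α > 1 and every feasible distribution p for the symmetric TSC scheme, one has Σ_{m=1}^{N^K} p_m^α ≥ Σ_{m=1}^{N^K} (p*_m)^α; consequently p* minimizes the Rényi divergence of order α from the uniform distribution among all feasible distributions. -/
/-! The optimal distribution `p*` is constant on each of the two cost classes `{m < N}` and
`{N ≤ m < N^K}`, and the cost constraint forces every feasible `p` to put the same mass as `p*`
on each class. So `p*` is the classwise average of `p`, and by Jensen's inequality for the convex
map `x ↦ x^α` averaging can only decrease `∑ pₘ^α`. For `α > 1` the Rényi divergence from the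
uniform distribution is an increasing function of this sum. -/

open Finset Real

/-- Download cost of option `m` (0-indexed: options `1,…,N` of the paper are `m < N`)
in the symmetric TSC scheme with `N` databases and `K` messages. -/
noncomputable def tscCost (N m : ℕ) : ℝ := if m < N then (N : ℝ) - 1 else (N : ℝ)

/-- `p` is a feasible query distribution for the symmetric TSC scheme with expected
normalized download cost `D`. -/
def TSCFeasible (N K : ℕ) (D : ℝ) (p : ℕ → ℝ) : Prop :=
  (∀ m ∈ Finset.range (N ^ K), 0 ≤ p m) ∧
  (∑ m ∈ Finset.range (N ^ K), p m = 1) ∧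
  (1 / ((N : ℝ) - 1)) * (∑ m ∈ Finset.range (N ^ K), p m * tscCost N m) = D

/-- The optimal distribution `p*` for the symmetric TSC scheme. -/
noncomputable def tscOpt (N K : ℕ) (D : ℝ) (m : ℕ) : ℝ :=
  if m < N then (1 - ((N : ℝ) - 1) * (D - 1)) / N
  else ((N : ℝ) - 1) * (D - 1) / ((N : ℝ) ^ K - (N : ℝ))

/-- Download cost of option `m` (0-indexed) in the alternative PIR scheme with
message length `L`. -/
noncomputable def altCost (N L m : ℕ) : ℝ := if m < N then (L : ℝ) else (L : ℝ) + 1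

/-- `p` is a feasible query distribution for the alternative PIR scheme
(`M = N (L+1)^(K-1)` options) with expected normalized download cost `D`. -/
def AltFeasible (N K L : ℕ) (D : ℝ) (p : ℕ → ℝ) : Prop :=
  (∀ m ∈ Finset.range (N * (L + 1) ^ (K - 1)), 0 ≤ p m) ∧
  (∑ m ∈ Finset.range (N * (L + 1) ^ (K - 1)), p m = 1) ∧
  (1 / (L : ℝ)) * (∑ m ∈ Finset.range (N * (L + 1) ^ (K - 1)), p m * altCost N L m) = D

/-- The optimal distribution `q*` for the alternative PIR scheme. -/
noncomputable def altOpt (N K L : ℕ) (D : ℝ) (m : ℕ) : ℝ :=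
  if m < N then (1 - (L : ℝ) * (D - 1)) / N
  else (L : ℝ) * (D - 1) / ((N : ℝ) * ((L : ℝ) + 1) ^ (K - 1) - (N : ℝ))

/-- Rényi divergence of order `α` (`0 < α`, `α ≠ 1`) of a distribution `p` on `M`
options from the uniform distribution on those options (natural logarithm). -/
noncomputable def renyiDiv (M : ℕ) (α : ℝ) (p : ℕ → ℝ) : ℝ :=
  (1 / (α - 1)) * Real.log ((M : ℝ) ^ (α - 1) * ∑ m ∈ Finset.range M, p m ^ α)

/-- Kullback–Leibler divergence of a distribution `p` on `M` options from the uniform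
distribution on those options (natural logarithm, with `0 · log 0 = 0`). -/
noncomputable def klDivUnif (M : ℕ) (p : ℕ → ℝ) : ℝ :=
  ∑ m ∈ Finset.range M, p m * Real.log ((M : ℝ) * p m)

/-- The maximum of `p` over the `M` options. -/
noncomputable def maxOver (M : ℕ) (hM : M ≠ 0) (p : ℕ → ℝ) : ℝ :=
  (Finset.range M).sup' (Finset.nonempty_range_iff.mpr hM) p

namespace Finset

variable {ι : Type*} {s : Finset ι} {f : ι → ℝ}

theorem sum_rpow_average_le_sum_rpow (hf : ∀ i ∈ s, 0 ≤ f i) {α : ℝ} (hα : 1 ≤ α) :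
    ∑ _i ∈ s, ((∑ j ∈ s, f j) / #s) ^ α ≤ ∑ i ∈ s, f i ^ α := by
  obtain rfl | hs := s.eq_empty_or_nonempty
  · simp
  have hcard : (0 : ℝ) < #s := by exact_mod_cast hs.card_pos
  have jensen := Real.rpow_arith_mean_le_arith_mean_rpow s (fun _ => (#s : ℝ)⁻¹) f
    (fun _ _ => by positivity) (by simp [hcard.ne']) hf hα
  rw [← mul_sum, ← mul_sum, ← div_eq_inv_mul, ← div_eq_inv_mul, le_div_iff₀ hcard] at jensen
  rw [sum_const, nsmul_eq_mul, mul_comm]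
  exact jensen

theorem sum_rpow_pos_of_sum_ne_zero (hf : ∀ i ∈ s, 0 ≤ f i) (hsum : ∑ i ∈ s, f i ≠ 0) (α : ℝ) :
    0 < ∑ i ∈ s, f i ^ α := by
  obtain ⟨i, hi, hfi⟩ := exists_ne_zero_of_sum_ne_zero hsum
  have hpos : 0 < f i ^ α := Real.rpow_pos_of_pos ((hf i hi).lt_of_ne' hfi) α
  exact hpos.trans_le <| single_le_sum (f := fun i => f i ^ α)
    (fun j hj => Real.rpow_nonneg (hf j hj) α) hi

end Finset

theorem renyiDiv_le_renyiDiv {M : ℕ} {α : ℝ} (hα : 1 < α) {p q : ℕ → ℝ}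
    (hq : 0 < ∑ m ∈ range M, q m ^ α) (hqp : ∑ m ∈ range M, q m ^ α ≤ ∑ m ∈ range M, p m ^ α) :
    renyiDiv M α q ≤ renyiDiv M α p := by
  have hM : (0 : ℝ) < M := by
    exact_mod_cast nonempty_range_iff.mp (nonempty_of_sum_ne_zero hq.ne') |> Nat.pos_of_ne_zero
  unfold renyiDiv
  gcongr

section TSC

variable {N K : ℕ} {D : ℝ} {p : ℕ → ℝ}

theorem tscOpt_of_lt {m : ℕ} (hm : m < N) :
    tscOpt N K D m = (1 - ((N : ℝ) - 1) * (D - 1)) / #(range N) := by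
  rw [tscOpt, if_pos hm, card_range]

theorem tscOpt_of_le {m : ℕ} (hNK : N ≤ N ^ K) (hm : N ≤ m) :
    tscOpt N K D m = ((N : ℝ) - 1) * (D - 1) / #(Ico N (N ^ K)) := by
  rw [tscOpt, if_neg hm.not_gt, Nat.card_Ico, Nat.cast_sub hNK, Nat.cast_pow]

theorem sum_tscOpt (hN : N ≠ 0) (hNK : N < N ^ K) : ∑ m ∈ range (N ^ K), tscOpt N K D m = 1 := by
  rw [← sum_range_add_sum_Ico _ hNK.le,
    sum_congr rfl fun m hm => tscOpt_of_lt (mem_range.mp hm),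
    sum_congr rfl fun m hm => tscOpt_of_le hNK.le (mem_Ico.mp hm).1,
    sum_const, sum_const, nsmul_eq_mul, nsmul_eq_mul,
    mul_div_cancel₀ _ (by simpa using hN),
    mul_div_cancel₀ _ (by simpa using Nat.sub_ne_zero_of_lt hNK)]
  ring

theorem TSCFeasible.sum_Ico (hN : 2 ≤ N) (hNK : N ≤ N ^ K) (hp : TSCFeasible N K D p) :
    ∑ m ∈ Ico N (N ^ K), p m = ((N : ℝ) - 1) * (D - 1) := by
  obtain ⟨-, hsum, hcost⟩ := hp
  have hN1 : (N : ℝ) - 1 ≠ 0 := by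
    have : (2 : ℝ) ≤ N := by exact_mod_cast hN
    linarith
  have hcost_low : ∑ m ∈ range N, p m * tscCost N m = ((N : ℝ) - 1) * ∑ m ∈ range N, p m := by
    rw [mul_sum]
    exact sum_congr rfl fun m hm => by rw [tscCost, if_pos (mem_range.mp hm), mul_comm]
  have hcost_high :
      ∑ m ∈ Ico N (N ^ K), p m * tscCost N m = (N : ℝ) * ∑ m ∈ Ico N (N ^ K), p m := by
    rw [mul_sum]
    exact sum_congr rfl fun m hm => by rw [tscCost, if_neg (mem_Ico.mp hm).1.not_gt, mul_comm]
  rw [← sum_range_add_sum_Ico _ hNK] at hsum hcost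
  rw [hcost_low, hcost_high, one_div, inv_mul_eq_iff_eq_mul₀ hN1] at hcost
  linear_combination hcost - ((N : ℝ) - 1) * hsum

theorem TSCFeasible.sum_range (hN : 2 ≤ N) (hNK : N ≤ N ^ K) (hp : TSCFeasible N K D p) :
    ∑ m ∈ range N, p m = 1 - ((N : ℝ) - 1) * (D - 1) := by
  rw [← hp.sum_Ico hN hNK, ← hp.2.1, ← sum_range_add_sum_Ico _ hNK, add_sub_cancel_right]

theorem TSCFeasible.tscOpt_eq_average_of_lt (hN : 2 ≤ N) (hNK : N ≤ N ^ K)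
    (hp : TSCFeasible N K D p) {m : ℕ} (hm : m < N) :
    tscOpt N K D m = (∑ i ∈ range N, p i) / #(range N) := by
  rw [tscOpt_of_lt hm, hp.sum_range hN hNK]

theorem TSCFeasible.tscOpt_eq_average_of_le (hN : 2 ≤ N) (hNK : N ≤ N ^ K)
    (hp : TSCFeasible N K D p) {m : ℕ} (hm : N ≤ m) :
    tscOpt N K D m = (∑ i ∈ Ico N (N ^ K), p i) / #(Ico N (N ^ K)) := by
  rw [tscOpt_of_le hNK hm, hp.sum_Ico hN hNK]

theorem TSCFeasible.tscOpt_nonneg (hN : 2 ≤ N) (hNK : N ≤ N ^ K) (hp : TSCFeasible N K D p) :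
    ∀ m ∈ range (N ^ K), 0 ≤ tscOpt N K D m := by
  have hlow : ∀ m ∈ range N, 0 ≤ p m := fun m hm =>
    hp.1 m (range_subset_range.mpr hNK hm)
  have hhigh : ∀ m ∈ Ico N (N ^ K), 0 ≤ p m := fun m hm =>
    hp.1 m (mem_range.mpr (mem_Ico.mp hm).2)
  intro m _
  rcases lt_or_ge m N with hm | hm
  · rw [hp.tscOpt_eq_average_of_lt hN hNK hm]
    exact div_nonneg (sum_nonneg hlow) (Nat.cast_nonneg _)
  · rw [hp.tscOpt_eq_average_of_le hN hNK hm]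
    exact div_nonneg (sum_nonneg hhigh) (Nat.cast_nonneg _)

theorem TSCFeasible.sum_tscOpt_rpow_le (hN : 2 ≤ N) (hNK : N ≤ N ^ K) (hp : TSCFeasible N K D p)
    {α : ℝ} (hα : 1 ≤ α) :
    ∑ m ∈ range (N ^ K), tscOpt N K D m ^ α ≤ ∑ m ∈ range (N ^ K), p m ^ α := by
  rw [← sum_range_add_sum_Ico _ hNK, ← sum_range_add_sum_Ico _ hNK]
  refine add_le_add
    ((sum_congr rfl fun m hm => ?_).trans_le <|
      sum_rpow_average_le_sum_rpow (fun m hm => hp.1 m (range_subset_range.mpr hNK hm)) hα)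
    ((sum_congr rfl fun m hm => ?_).trans_le <|
      sum_rpow_average_le_sum_rpow (fun m hm => hp.1 m (mem_range.mpr (mem_Ico.mp hm).2)) hα)
  · rw [hp.tscOpt_eq_average_of_lt hN hNK (mem_range.mp hm)]
  · rw [hp.tscOpt_eq_average_of_le hN hNK (mem_Ico.mp hm).1]

end TSC

theorem tsc_renyi_min_gt_one_general (N K : ℕ) (hN : 2 ≤ N) (hK : 2 ≤ K) (D : ℝ)
    (α : ℝ) (hα : 1 < α)
    (p : ℕ → ℝ) (hp : TSCFeasible N K D p) :
    (∑ m ∈ Finset.range (N ^ K), tscOpt N K D m ^ α) ≤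
      (∑ m ∈ Finset.range (N ^ K), p m ^ α) ∧
    renyiDiv (N ^ K) α (tscOpt N K D) ≤ renyiDiv (N ^ K) α p := by
  have hNK : N < N ^ K := lt_self_pow₀ hN hK
  have hle := hp.sum_tscOpt_rpow_le hN hNK.le hα.le
  have hpos : 0 < ∑ m ∈ range (N ^ K), tscOpt N K D m ^ α := by
    refine sum_rpow_pos_of_sum_ne_zero (hp.tscOpt_nonneg hN hNK.le) ?_ α
    rw [sum_tscOpt (by omega) hNK]
    exact one_ne_zero
  exact ⟨hle, renyiDiv_le_renyiDiv hα hpos hle⟩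

/-- for `α > 1`, every feasible `p` for the symmetric TSC scheme satisfies
`∑ p*ₘ^α ≤ ∑ pₘ^α`; consequently `p*` minimizes the order-`α` Rényi divergence from
uniform among feasible distributions. -/
theorem tsc_renyi_min_gt_one (N K : ℕ) (hN : 2 ≤ N) (hK : 2 ≤ K) (D : ℝ)
    (hD1 : 1 ≤ D) (hD2 : D ≤ ∑ k ∈ Finset.range K, ((N : ℝ) ^ k)⁻¹)
    (α : ℝ) (hα : 1 < α)
    (p : ℕ → ℝ) (hp : TSCFeasible N K D p) :
    (∑ m ∈ Finset.range (N ^ K), tscOpt N K D m ^ α) ≤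
      (∑ m ∈ Finset.range (N ^ K), p m ^ α) ∧
    renyiDiv (N ^ K) α (tscOpt N K D) ≤ renyiDiv (N ^ K) α p :=
  tsc_renyi_min_gt_one_general N K hN hK D α hα p hp
end

section
/- For every real number α with 0 < α < 1 and every feasible distribution p for the symmetric TSC scheme, one has Σ_{m=1}^{N^K} p_m^α ≤ Σ_{m=1}^{N^K} (p*_m)^α; consequently p* minimizes the Rényi divergence of order α from the uniform distribution among all feasible distributions. -/
open Finset Real

/-!
The two constraints fix how much mass a feasible `p` puts on the cheap options `m < N` and on
the expensive ones, and `p*` spreads each of these two masses uniformly over its class. Jensen's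
inequality for the concave map `x ↦ x ^ α` on each class gives `∑ pₘ ^ α ≤ ∑ p*ₘ ^ α`, and for
`α < 1` the Rényi divergence from uniform is a decreasing function of `∑ pₘ ^ α`.
-/

theorem Finset.sum_rpow_le_card_mul_rpow_avg {ι : Type*} (s : Finset ι) {f : ι → ℝ}
    (hf : ∀ i ∈ s, 0 ≤ f i) {α : ℝ} (hα0 : 0 ≤ α) (hα1 : α ≤ 1) :
    ∑ i ∈ s, f i ^ α ≤ #s * ((∑ i ∈ s, f i) / #s) ^ α := by
  rcases s.eq_empty_or_nonempty with rfl | hs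
  · simp
  have hcard : (0 : ℝ) < #s := by exact_mod_cast hs.card_pos
  have jensen := (Real.concaveOn_rpow hα0 hα1).le_map_sum (t := s) (w := fun _ => (#s : ℝ)⁻¹)
    (p := f) (fun _ _ => by positivity) (by simp [hcard.ne']) hf
  simp only [smul_eq_mul, ← Finset.mul_sum] at jensen
  rw [div_eq_inv_mul]
  calc ∑ i ∈ s, f i ^ α = #s * ((#s : ℝ)⁻¹ * ∑ i ∈ s, f i ^ α) := by field_simp
    _ ≤ _ := by gcongr

theorem Finset.sum_rpow_pos {ι : Type*} {s : Finset ι} {f : ι → ℝ} (hf : ∀ i ∈ s, 0 ≤ f i)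
    (hsum : 0 < ∑ i ∈ s, f i) (α : ℝ) : 0 < ∑ i ∈ s, f i ^ α := by
  obtain ⟨i, hi, hfi⟩ := Finset.exists_lt_of_sum_lt (by simpa using hsum : ∑ i ∈ s, (0:ℝ) < _)
  exact Finset.sum_pos' (fun j hj => Real.rpow_nonneg (hf j hj) α)
    ⟨i, hi, Real.rpow_pos_of_pos hfi α⟩

theorem renyiDiv_le_renyiDiv_of_sum_rpow_le {M : ℕ} {α : ℝ} (hα1 : α < 1) {p q : ℕ → ℝ}
    (hp : 0 < ∑ m ∈ range M, p m ^ α) (hpq : ∑ m ∈ range M, p m ^ α ≤ ∑ m ∈ range M, q m ^ α) :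
    renyiDiv M α q ≤ renyiDiv M α p := by
  have hM : (0 : ℝ) < M := by
    exact_mod_cast Finset.nonempty_range_iff.mp (Finset.nonempty_of_sum_ne_zero hp.ne') |>.bot_lt
  have hMα : (0 : ℝ) < (M : ℝ) ^ (α - 1) := Real.rpow_pos_of_pos hM _
  unfold renyiDiv
  refine mul_le_mul_of_nonpos_left ?_ (by rw [one_div]; exact inv_nonpos.mpr (by linarith))
  gcongr

namespace TSCFeasible

variable {N K : ℕ} {D : ℝ} {p : ℕ → ℝ}

theorem sum_Ico_eq (hp : TSCFeasible N K D p) (hN : 1 < N) (hNK : N ≤ N ^ K) :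
    ∑ m ∈ Ico N (N ^ K), p m = (N - 1) * (D - 1) := by
  obtain ⟨-, hmass, hcost⟩ := hp
  have hN1 : (N : ℝ) - 1 ≠ 0 := sub_ne_zero.mpr (by exact_mod_cast hN.ne')
  rw [← sum_range_add_sum_Ico _ hNK] at hmass hcost
  have hlow : ∑ m ∈ range N, p m * tscCost N m = (N - 1) * ∑ m ∈ range N, p m := by
    rw [mul_sum]
    exact sum_congr rfl fun m hm => by rw [tscCost, if_pos (mem_range.mp hm), mul_comm]
  have hhigh : ∑ m ∈ Ico N (N ^ K), p m * tscCost N m = N * ∑ m ∈ Ico N (N ^ K), p m := by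
    rw [mul_sum]
    exact sum_congr rfl fun m hm => by
      rw [tscCost, if_neg (not_lt.mpr (mem_Ico.mp hm).1), mul_comm]
  rw [hlow, hhigh] at hcost
  field_simp at hcost
  linear_combination hcost - (N - 1) * hmass

theorem sum_range_eq (hp : TSCFeasible N K D p) (hN : 1 < N) (hNK : N ≤ N ^ K) :
    ∑ m ∈ range N, p m = 1 - (N - 1) * (D - 1) := by
  have hmass := hp.2.1
  rw [← sum_range_add_sum_Ico _ hNK, hp.sum_Ico_eq hN hNK] at hmass
  linarith

theorem sum_rpow_le_sum_tscOpt_rpow (hp : TSCFeasible N K D p) (hN : 1 < N) (hK : K ≠ 0)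
    {α : ℝ} (hα0 : 0 ≤ α) (hα1 : α ≤ 1) :
    ∑ m ∈ range (N ^ K), p m ^ α ≤ ∑ m ∈ range (N ^ K), tscOpt N K D m ^ α := by
  have hNK : N ≤ N ^ K := Nat.le_self_pow hK N
  have hp0 : ∀ m ∈ range (N ^ K), 0 ≤ p m := hp.1
  have hlow : ∑ m ∈ range N, tscOpt N K D m ^ α
      = #(range N) * ((∑ m ∈ range N, p m) / #(range N)) ^ α := by
    rw [sum_congr rfl fun m hm => by rw [tscOpt, if_pos (mem_range.mp hm)], sum_const,
      nsmul_eq_mul, hp.sum_range_eq hN hNK, card_range]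
  have hhigh : ∑ m ∈ Ico N (N ^ K), tscOpt N K D m ^ α
      = #(Ico N (N ^ K)) * ((∑ m ∈ Ico N (N ^ K), p m) / #(Ico N (N ^ K))) ^ α := by
    rw [sum_congr rfl fun m hm => by rw [tscOpt, if_neg (not_lt.mpr (mem_Ico.mp hm).1)],
      sum_const, nsmul_eq_mul, hp.sum_Ico_eq hN hNK, Nat.card_Ico, Nat.cast_sub hNK,
      Nat.cast_pow]
  rw [← sum_range_add_sum_Ico _ hNK, ← sum_range_add_sum_Ico _ hNK, hlow, hhigh]
  exact add_le_add
    (sum_rpow_le_card_mul_rpow_avg _ (fun m hm => hp0 m (mem_range.mpr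
      ((mem_range.mp hm).trans_le hNK))) hα0 hα1)
    (sum_rpow_le_card_mul_rpow_avg _ (fun m hm => hp0 m (mem_range.mpr
      (mem_Ico.mp hm).2)) hα0 hα1)

end TSCFeasible

theorem tsc_renyi_min_lt_one_general (N K : ℕ) (hN : 2 ≤ N) (hK : 2 ≤ K) (D : ℝ)
    (α : ℝ) (hα0 : 0 < α) (hα1 : α < 1)
    (p : ℕ → ℝ) (hp : TSCFeasible N K D p) :
    (∑ m ∈ Finset.range (N ^ K), p m ^ α) ≤
      (∑ m ∈ Finset.range (N ^ K), tscOpt N K D m ^ α) ∧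
    renyiDiv (N ^ K) α (tscOpt N K D) ≤ renyiDiv (N ^ K) α p := by
  have hsum := hp.sum_rpow_le_sum_tscOpt_rpow (by omega) (by omega) hα0.le hα1.le
  have hpos : 0 < ∑ m ∈ range (N ^ K), p m ^ α :=
    sum_rpow_pos hp.1 (by rw [hp.2.1]; exact one_pos) α
  exact ⟨hsum, renyiDiv_le_renyiDiv_of_sum_rpow_le hα1 hpos hsum⟩

/-- for `0 < α < 1`, every feasible `p` for the symmetric TSC scheme satisfies
`∑ pₘ^α ≤ ∑ p*ₘ^α`; consequently `p*` minimizes the order-`α` Rényi divergence from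
uniform among feasible distributions. -/
theorem tsc_renyi_min_lt_one (N K : ℕ) (hN : 2 ≤ N) (hK : 2 ≤ K) (D : ℝ)
    (hD1 : 1 ≤ D) (hD2 : D ≤ ∑ k ∈ Finset.range K, ((N : ℝ) ^ k)⁻¹)
    (α : ℝ) (hα0 : 0 < α) (hα1 : α < 1)
    (p : ℕ → ℝ) (hp : TSCFeasible N K D p) :
    (∑ m ∈ Finset.range (N ^ K), p m ^ α) ≤
      (∑ m ∈ Finset.range (N ^ K), tscOpt N K D m ^ α) ∧
    renyiDiv (N ^ K) α (tscOpt N K D) ≤ renyiDiv (N ^ K) α p :=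
  tsc_renyi_min_lt_one_general N K hN hK D α hα0 hα1 p hp
end

section
/- Every feasible distribution p for the symmetric TSC scheme satisfies max_{m ∈ {1,…,N^K}} p_m ≥ (1−(N−1)(D−1))/N. Consequently, the Rényi divergence of order ∞ from uniform, log( N^K · max_m p_m ), is at least log((1−(N−1)(D−1))/N) + K·log N for every feasible p. -/
open Finset Real

/-- every feasible `p` for the symmetric TSC scheme satisfies
`max_m pₘ ≥ (1-(N-1)(D-1))/N`; consequently the order-∞ Rényi divergence
`log (N^K · max_m pₘ)` is at least `log((1-(N-1)(D-1))/N) + K log N`. -/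
theorem tsc_max_lower_bound (N K : ℕ) (hN : 2 ≤ N) (hK : 2 ≤ K) (D : ℝ)
    (hD1 : 1 ≤ D) (hD2 : D ≤ ∑ k ∈ Finset.range K, ((N : ℝ) ^ k)⁻¹)
    (p : ℕ → ℝ) (hp : TSCFeasible N K D p) :
    (1 - ((N : ℝ) - 1) * (D - 1)) / N ≤
      maxOver (N ^ K) (pow_ne_zero K (show N ≠ 0 by omega)) p ∧
    Real.log ((1 - ((N : ℝ) - 1) * (D - 1)) / N) + (K : ℝ) * Real.log N ≤
      Real.log ((N : ℝ) ^ K * maxOver (N ^ K) (pow_ne_zero K (show N ≠ 0 by omega)) p) := by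
  have hN0 : (0:ℝ) < N := by positivity
  have hN1 : (1:ℝ) < N := by exact_mod_cast hN
  have hNM : N ≤ N ^ K := Nat.le_self_pow (by omega) N
  obtain ⟨hnn, hsum, hcost⟩ := hp
  set M := N ^ K with hM
  set mx := maxOver M (pow_ne_zero K (show N ≠ 0 by omega)) p with hmx
  -- split sums
  have hsplit : ∀ f : ℕ → ℝ, ∑ m ∈ Finset.range M, f m =
      (∑ m ∈ Finset.range N, f m) + ∑ m ∈ Finset.Ico N M, f m := by
    intro f
    simp only [Finset.range_eq_Ico]
    exact (Finset.sum_Ico_consecutive f (Nat.zero_le N) hNM).symm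
  have hS : (∑ m ∈ Finset.range N, p m) + ∑ m ∈ Finset.Ico N M, p m = 1 := by
    rw [← hsplit]; exact hsum
  have hcost' : (∑ m ∈ Finset.range M, p m * tscCost N m) = ((N:ℝ) - 1) * D := by
    have h1 : (N:ℝ) - 1 ≠ 0 := by linarith
    field_simp at hcost
    linarith [hcost]
  have hcost2 : ((N:ℝ) - 1) * (∑ m ∈ Finset.range N, p m)
      + (N:ℝ) * (∑ m ∈ Finset.Ico N M, p m) = ((N:ℝ) - 1) * D := by
    rw [← hcost', hsplit (fun m => p m * tscCost N m)]
    rw [Finset.mul_sum, Finset.mul_sum]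
    congr 1
    · apply Finset.sum_congr rfl
      intro m hm
      simp only [tscCost, if_pos (Finset.mem_range.mp hm)]
      ring
    · apply Finset.sum_congr rfl
      intro m hm
      have : ¬ m < N := by
        have := (Finset.mem_Ico.mp hm).1; omega
      simp only [tscCost, if_neg this]
      ring
  have hS1 : (∑ m ∈ Finset.range N, p m) = 1 - ((N:ℝ) - 1) * (D - 1) := by
    nlinarith [hS, hcost2]
  -- max bound
  have hmem : ∀ m ∈ Finset.range N, p m ≤ mx := by
    intro m hm
    apply Finset.le_sup'
    rw [Finset.mem_range] at hm ⊢
    omega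
  have hSle : (∑ m ∈ Finset.range N, p m) ≤ (N:ℝ) * mx := by
    calc (∑ m ∈ Finset.range N, p m) ≤ ∑ m ∈ Finset.range N, mx :=
          Finset.sum_le_sum hmem
      _ = (N:ℝ) * mx := by simp [mul_comm]
  have hmain : (1 - ((N : ℝ) - 1) * (D - 1)) / N ≤ mx := by
    rw [div_le_iff₀ hN0, ← hS1]
    linarith [hSle]
  -- positivity of a
  have hgeo : (∑ k ∈ Finset.range K, ((N : ℝ) ^ k)⁻¹) < (N:ℝ) / ((N:ℝ) - 1) := by
    have hr : ((N:ℝ))⁻¹ < 1 := by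
      rw [inv_lt_one_iff₀]; right; exact hN1
    have hr0 : (0:ℝ) < (N:ℝ)⁻¹ := by positivity
    have heq : (∑ k ∈ Finset.range K, ((N : ℝ) ^ k)⁻¹)
        = (1 - ((N:ℝ)⁻¹) ^ K) / (1 - (N:ℝ)⁻¹) := by
      have h0 : (∑ k ∈ Finset.range K, ((N : ℝ) ^ k)⁻¹)
          = ∑ k ∈ Finset.range K, ((N:ℝ)⁻¹) ^ k := by
        simp [inv_pow]
      rw [h0, geom_sum_eq (ne_of_lt hr), ← neg_sub (1:ℝ) (((N:ℝ)⁻¹) ^ K),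
        ← neg_sub (1:ℝ) ((N:ℝ)⁻¹), neg_div_neg_eq]
    rw [heq]
    have h1r : (0:ℝ) < 1 - (N:ℝ)⁻¹ := by linarith
    have hpow : (0:ℝ) < ((N:ℝ)⁻¹) ^ K := by positivity
    have : (1 - ((N:ℝ)⁻¹) ^ K) / (1 - (N:ℝ)⁻¹) < 1 / (1 - (N:ℝ)⁻¹) := by
      apply div_lt_div_of_pos_right (by linarith) h1r
    calc (1 - ((N:ℝ)⁻¹) ^ K) / (1 - (N:ℝ)⁻¹) < 1 / (1 - (N:ℝ)⁻¹) := this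
      _ = (N:ℝ) / ((N:ℝ) - 1) := by
          rw [one_div]
          field_simp
  have hapos : 0 < (1 - ((N : ℝ) - 1) * (D - 1)) / N := by
    apply div_pos _ hN0
    have hD' : D < (N:ℝ) / ((N:ℝ) - 1) := lt_of_le_of_lt hD2 hgeo
    have h1 : (0:ℝ) < (N:ℝ) - 1 := by linarith
    rw [lt_div_iff₀ h1] at hD'
    nlinarith [hD']
  refine ⟨hmain, ?_⟩
  have hmxpos : 0 < mx := lt_of_lt_of_le hapos hmain
  have hNKpos : (0:ℝ) < (N:ℝ) ^ K := by positivity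
  have h1 : Real.log ((N:ℝ)^K * ((1 - ((N : ℝ) - 1) * (D - 1)) / N))
      ≤ Real.log ((N:ℝ)^K * mx) := by
    apply Real.log_le_log (by positivity)
    exact mul_le_mul_of_nonneg_left hmain (le_of_lt hNKpos)
  calc Real.log ((1 - ((N : ℝ) - 1) * (D - 1)) / N) + (K : ℝ) * Real.log N
      = Real.log ((N:ℝ)^K * ((1 - ((N : ℝ) - 1) * (D - 1)) / N)) := by
        rw [Real.log_mul (by positivity) (ne_of_gt hapos), Real.log_pow]
        ring
    _ ≤ Real.log ((N:ℝ)^K * mx) := h1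
end

section
/- For every real α ∈ (0,∞) with α ≠ 1, the minimum of the Rényi divergence D_α(p‖U) over all feasible distributions p for the symmetric TSC scheme equals (1/(α−1)) · log[ N·((1−(N−1)(D−1))/N)^α + (N^K−N)·((N−1)(D−1)/(N^K−N))^α ] + K·log N, and this minimum is attained by p*. -/
open Finset Real

lemma sum_rpow_ge' (s : Finset ℕ) (hs : s.Nonempty) (f : ℕ → ℝ) (hf : ∀ i ∈ s, 0 ≤ f i)
    {a : ℝ} (ha : 1 ≤ a) :
    (s.card : ℝ) * ((∑ i ∈ s, f i) / s.card) ^ a ≤ ∑ i ∈ s, f i ^ a := by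
  have hn : (0:ℝ) < s.card := by exact_mod_cast hs.card_pos
  have h := (convexOn_rpow ha).map_sum_le (t := s) (w := fun _ => (s.card:ℝ)⁻¹) (p := f)
    (fun i _ => by positivity) (by simp [Finset.sum_const]; field_simp) (fun i hi => hf i hi)
  simp only [smul_eq_mul, ← Finset.mul_sum] at h
  rw [show (s.card:ℝ)⁻¹ * ∑ i ∈ s, f i = (∑ i ∈ s, f i) / s.card by ring] at h
  calc (s.card : ℝ) * ((∑ i ∈ s, f i) / s.card) ^ a
      ≤ (s.card : ℝ) * ((s.card:ℝ)⁻¹ * ∑ i ∈ s, f i ^ a) :=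
        mul_le_mul_of_nonneg_left h hn.le
    _ = ∑ i ∈ s, f i ^ a := by field_simp

lemma sum_rpow_le' (s : Finset ℕ) (hs : s.Nonempty) (f : ℕ → ℝ) (hf : ∀ i ∈ s, 0 ≤ f i)
    {a : ℝ} (ha0 : 0 ≤ a) (ha : a ≤ 1) :
    ∑ i ∈ s, f i ^ a ≤ (s.card : ℝ) * ((∑ i ∈ s, f i) / s.card) ^ a := by
  have hn : (0:ℝ) < s.card := by exact_mod_cast hs.card_pos
  have h := (Real.concaveOn_rpow ha0 ha).le_map_sum (t := s) (w := fun _ => (s.card:ℝ)⁻¹) (p := f)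
    (fun i _ => by positivity) (by simp [Finset.sum_const]; field_simp) (fun i hi => hf i hi)
  simp only [smul_eq_mul, ← Finset.mul_sum] at h
  rw [show (s.card:ℝ)⁻¹ * ∑ i ∈ s, f i = (∑ i ∈ s, f i) / s.card by ring] at h
  calc ∑ i ∈ s, f i ^ a = (s.card : ℝ) * ((s.card:ℝ)⁻¹ * ∑ i ∈ s, f i ^ a) := by field_simp
    _ ≤ (s.card : ℝ) * ((∑ i ∈ s, f i) / s.card) ^ a := mul_le_mul_of_nonneg_left h hn.le

lemma renyi_eval' (M : ℕ) (hM : 0 < M) (α : ℝ) (hα1 : α ≠ 1) (X : ℝ) (hX : 0 < X) :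
    (1/(α-1)) * Real.log ((M:ℝ)^(α-1) * X) = (1/(α-1)) * Real.log X + Real.log M := by
  have hM' : (0:ℝ) < M := by exact_mod_cast hM
  rw [Real.log_mul (by positivity) hX.ne', Real.log_rpow hM']
  have h : α - 1 ≠ 0 := sub_ne_zero.mpr hα1
  field_simp
  ring


/-- for every order `α ∈ (0,∞)`, `α ≠ 1`, the minimum of the Rényi
divergence from uniform over feasible distributions of the symmetric TSC scheme equals
`(1/(α-1)) log[N((1-(N-1)(D-1))/N)^α + (N^K-N)((N-1)(D-1)/(N^K-N))^α] + K log N`,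
attained by `p*`. -/
theorem tsc_renyi_tradeoff (N K : ℕ) (hN : 2 ≤ N) (hK : 2 ≤ K) (D : ℝ)
    (hD1 : 1 ≤ D) (hD2 : D ≤ ∑ k ∈ Finset.range K, ((N : ℝ) ^ k)⁻¹)
    (α : ℝ) (hα0 : 0 < α) (hα1 : α ≠ 1) :
    TSCFeasible N K D (tscOpt N K D) ∧
    (∀ p : ℕ → ℝ, TSCFeasible N K D p →
      (1 / (α - 1)) * Real.log
          ((N : ℝ) * ((1 - ((N : ℝ) - 1) * (D - 1)) / N) ^ α +
            ((N : ℝ) ^ K - N) * (((N : ℝ) - 1) * (D - 1) / ((N : ℝ) ^ K - N)) ^ α) +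
        (K : ℝ) * Real.log N ≤ renyiDiv (N ^ K) α p) ∧
    renyiDiv (N ^ K) α (tscOpt N K D) =
      (1 / (α - 1)) * Real.log
          ((N : ℝ) * ((1 - ((N : ℝ) - 1) * (D - 1)) / N) ^ α +
            ((N : ℝ) ^ K - N) * (((N : ℝ) - 1) * (D - 1) / ((N : ℝ) ^ K - N)) ^ α) +
        (K : ℝ) * Real.log N := by
  have hN0 : 0 < N := by omega
  have hN1 : (1:ℝ) < N := by exact_mod_cast hN
  have hNR : (0:ℝ) < (N:ℝ) - 1 := by linarith
  have hNM : N < N ^ K := by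
    calc N = N ^ 1 := (pow_one N).symm
    _ < N ^ K := Nat.pow_lt_pow_right (by omega) (by omega)
  have hMN : N ≤ N ^ K := hNM.le
  have hMpos : 0 < N ^ K := by positivity
  have hC : (0:ℝ) < (N:ℝ)^K - N := by
    have h : ((N:ℕ):ℝ) < ((N^K : ℕ):ℝ) := by exact_mod_cast hNM
    push_cast at h; linarith
  have hB : (0:ℝ) ≤ ((N:ℝ)-1)*(D-1) := mul_nonneg hNR.le (by linarith)
  -- A > 0
  have hNne : (N:ℝ) ≠ 0 := by positivity
  have hinv : (N:ℝ)⁻¹ < 1 := by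
    nlinarith [mul_inv_cancel₀ hNne, inv_pos.mpr (show (0:ℝ) < N by linarith)]
  have hG : ∑ k ∈ Finset.range K, ((N:ℝ)^k)⁻¹ = (((N:ℝ)⁻¹)^K - 1)/((N:ℝ)⁻¹ - 1) := by
    simpa [inv_pow] using geom_sum_eq (by linarith : (N:ℝ)⁻¹ ≠ 1) K
  have hkey : ((N:ℝ)-1) * (∑ k ∈ Finset.range K, ((N:ℝ)^k)⁻¹)
      = (N:ℝ) - (N:ℝ) * ((N:ℝ)⁻¹)^K := by
    have hyne : (N:ℝ)⁻¹ - 1 ≠ 0 := by linarith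
    have hNinv : (N:ℝ) * (N:ℝ)⁻¹ = 1 := mul_inv_cancel₀ hNne
    rw [hG, mul_div_assoc', div_eq_iff hyne]
    linear_combination (((N:ℝ)⁻¹)^K - 1) * hNinv
  have hA : (0:ℝ) < 1 - ((N:ℝ)-1)*(D-1) := by
    have h1 : (0:ℝ) < (N:ℝ) * ((N:ℝ)⁻¹)^K := by positivity
    have h2 : ((N:ℝ)-1) * D ≤ ((N:ℝ)-1) * ∑ k ∈ Finset.range K, ((N:ℝ)^k)⁻¹ :=
      mul_le_mul_of_nonneg_left hD2 hNR.le
    nlinarith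
  have hcast : ((N ^ K - N : ℕ) : ℝ) = (N:ℝ)^K - (N:ℝ) := by
    rw [Nat.cast_sub hMN]; push_cast; ring
  have hsplit : ∀ f : ℕ → ℝ, ∑ m ∈ Finset.range (N^K), f m
      = ∑ m ∈ Finset.range N, f m + ∑ m ∈ Finset.Ico N (N^K), f m := fun f =>
    (Finset.sum_range_add_sum_Ico f hMN).symm
  have hcost : ∀ q : ℕ → ℝ, ∑ m ∈ Finset.range (N^K), q m * tscCost N m
      = ((N:ℝ)-1) * (∑ m ∈ Finset.range N, q m)
        + (N:ℝ) * (∑ m ∈ Finset.Ico N (N^K), q m) := by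
    intro q
    rw [hsplit]
    congr 1
    · rw [Finset.mul_sum]
      refine Finset.sum_congr rfl fun m hm => ?_
      rw [tscCost, if_pos (Finset.mem_range.mp hm)]; ring
    · rw [Finset.mul_sum]
      refine Finset.sum_congr rfl fun m hm => ?_
      have h := (Finset.mem_Ico.mp hm).1
      rw [tscCost, if_neg (by omega)]; ring
  -- sums of tscOpt
  have hsum1 : ∑ m ∈ Finset.range N, tscOpt N K D m = 1 - ((N:ℝ)-1)*(D-1) := by
    rw [Finset.sum_congr rfl (fun m hm => by
      rw [tscOpt, if_pos (Finset.mem_range.mp hm)]),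
      Finset.sum_const, Finset.card_range, nsmul_eq_mul]
    field_simp
  have hsum2 : ∑ m ∈ Finset.Ico N (N^K), tscOpt N K D m = ((N:ℝ)-1)*(D-1) := by
    rw [Finset.sum_congr rfl (fun m hm => by
      rw [tscOpt, if_neg (by have := (Finset.mem_Ico.mp hm).1; omega)]),
      Finset.sum_const, Nat.card_Ico, nsmul_eq_mul, hcast]
    field_simp
  have hfeas : TSCFeasible N K D (tscOpt N K D) := by
    refine ⟨fun m _ => ?_, ?_, ?_⟩
    · rw [tscOpt]; split
      · exact div_nonneg hA.le (by linarith)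
      · exact div_nonneg hB hC.le
    · rw [hsplit, hsum1, hsum2]; ring
    · rw [hcost, hsum1, hsum2]; field_simp; ring
  -- rpow sums of tscOpt
  have hsum1' : ∑ m ∈ Finset.range N, tscOpt N K D m ^ α
      = (N:ℝ) * ((1 - ((N:ℝ)-1)*(D-1)) / N) ^ α := by
    rw [Finset.sum_congr rfl (fun m hm => by
      rw [tscOpt, if_pos (Finset.mem_range.mp hm)]),
      Finset.sum_const, Finset.card_range, nsmul_eq_mul]
  have hsum2' : ∑ m ∈ Finset.Ico N (N^K), tscOpt N K D m ^ α
      = ((N:ℝ)^K - N) * (((N:ℝ)-1)*(D-1) / ((N:ℝ)^K - N)) ^ α := by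
    rw [Finset.sum_congr rfl (fun m hm => by
      rw [tscOpt, if_neg (by have := (Finset.mem_Ico.mp hm).1; omega)]),
      Finset.sum_const, Nat.card_Ico, nsmul_eq_mul, hcast]
  have hX : (0:ℝ) < (N : ℝ) * ((1 - ((N : ℝ) - 1) * (D - 1)) / N) ^ α +
      ((N : ℝ) ^ K - N) * (((N : ℝ) - 1) * (D - 1) / ((N : ℝ) ^ K - N)) ^ α := by
    have h1 : (0:ℝ) < (N : ℝ) * ((1 - ((N : ℝ) - 1) * (D - 1)) / N) ^ α :=
      mul_pos (by linarith) (Real.rpow_pos_of_pos (div_pos hA (by linarith)) α)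
    have h2 : (0:ℝ) ≤ ((N : ℝ) ^ K - N) * (((N : ℝ) - 1) * (D - 1) / ((N : ℝ) ^ K - N)) ^ α :=
      mul_nonneg hC.le (Real.rpow_nonneg (div_nonneg hB hC.le) α)
    linarith
  have hlogM : Real.log ((N^K : ℕ) : ℝ) = (K:ℝ) * Real.log N := by
    push_cast
    rw [Real.log_pow]
  refine ⟨hfeas, ?_, ?_⟩
  · -- lower bound
    intro p hp
    obtain ⟨hp0, hp1, hp2⟩ := hp
    have hp0' : ∀ m ∈ Finset.range N, 0 ≤ p m := fun m hm =>
      hp0 m (Finset.mem_range.mpr (lt_of_lt_of_le (Finset.mem_range.mp hm) hMN))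
    have hp0'' : ∀ m ∈ Finset.Ico N (N^K), 0 ≤ p m := fun m hm =>
      hp0 m (Finset.mem_range.mpr (Finset.mem_Ico.mp hm).2)
    -- block sums
    have hp1' := hp1
    rw [hsplit] at hp1'
    have hcost' : ((N:ℝ)-1) * (∑ m ∈ Finset.range N, p m)
        + (N:ℝ) * (∑ m ∈ Finset.Ico N (N^K), p m) = ((N:ℝ)-1) * D := by
      rw [← hcost, ← hp2]; field_simp
    have hS1 : ∑ m ∈ Finset.range N, p m = 1 - ((N:ℝ)-1)*(D-1) := by
      linear_combination (N:ℝ) * hp1' - hcost'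
    have hS2 : ∑ m ∈ Finset.Ico N (N^K), p m = ((N:ℝ)-1)*(D-1) := by
      linear_combination hcost' - ((N:ℝ)-1) * hp1'
    -- positivity of the rpow sum
    have hSnn : ∀ m ∈ Finset.range (N^K), (0:ℝ) ≤ p m ^ α := fun m hm =>
      Real.rpow_nonneg (hp0 m hm) α
    have hSpos : (0:ℝ) < ∑ m ∈ Finset.range (N^K), p m ^ α := by
      obtain ⟨m, hm, hpm⟩ : ∃ m ∈ Finset.range (N^K), 0 < p m := by
        by_contra h
        push_neg at h
        have h1 : ∑ m ∈ Finset.range (N^K), p m ≤ 0 :=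
          Finset.sum_nonpos fun m hm => h m hm
        rw [hp1] at h1; linarith
      exact lt_of_lt_of_le (Real.rpow_pos_of_pos hpm α)
        (Finset.single_le_sum hSnn hm)
    have hMR : (0:ℝ) < ((N^K : ℕ):ℝ) := by exact_mod_cast hMpos
    have hrw : renyiDiv (N ^ K) α p
        = (1/(α-1)) * Real.log (∑ m ∈ Finset.range (N^K), p m ^ α)
          + (K:ℝ) * Real.log N := by
      rw [renyiDiv, renyi_eval' (N^K) hMpos α hα1 _ hSpos, hlogM]
    rw [hrw]
    have hkey2 : (1/(α-1)) * Real.log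
        ((N : ℝ) * ((1 - ((N : ℝ) - 1) * (D - 1)) / N) ^ α +
          ((N : ℝ) ^ K - N) * (((N : ℝ) - 1) * (D - 1) / ((N : ℝ) ^ K - N)) ^ α)
        ≤ (1/(α-1)) * Real.log (∑ m ∈ Finset.range (N^K), p m ^ α) := by
      rcases hα1.lt_or_gt with hlt | hgt
      · -- α < 1 : concave, sum ≤ X, 1/(α-1) < 0
        have j1 := sum_rpow_le' (Finset.range N)
          (Finset.nonempty_range_iff.mpr (by omega)) p hp0' hα0.le hlt.le
        rw [Finset.card_range, hS1] at j1
        have j2 := sum_rpow_le' (Finset.Ico N (N^K))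
          (Finset.nonempty_Ico.mpr hNM) p hp0'' hα0.le hlt.le
        rw [Nat.card_Ico, hcast, hS2] at j2
        have hle : ∑ m ∈ Finset.range (N^K), p m ^ α
            ≤ (N : ℝ) * ((1 - ((N : ℝ) - 1) * (D - 1)) / N) ^ α +
              ((N : ℝ) ^ K - N) * (((N : ℝ) - 1) * (D - 1) / ((N : ℝ) ^ K - N)) ^ α := by
          rw [hsplit (fun m => p m ^ α)]; linarith
        have hlog := Real.log_le_log hSpos hle
        have hc : 1/(α-1) ≤ 0 := by
          apply div_nonpos_of_nonneg_of_nonpos <;> linarith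
        exact mul_le_mul_of_nonpos_left hlog hc
      · -- α > 1 : convex, X ≤ sum, 1/(α-1) > 0
        have j1 := sum_rpow_ge' (Finset.range N)
          (Finset.nonempty_range_iff.mpr (by omega)) p hp0' hgt.le
        rw [Finset.card_range, hS1] at j1
        have j2 := sum_rpow_ge' (Finset.Ico N (N^K))
          (Finset.nonempty_Ico.mpr hNM) p hp0'' hgt.le
        rw [Nat.card_Ico, hcast, hS2] at j2
        have hle : (N : ℝ) * ((1 - ((N : ℝ) - 1) * (D - 1)) / N) ^ α +
              ((N : ℝ) ^ K - N) * (((N : ℝ) - 1) * (D - 1) / ((N : ℝ) ^ K - N)) ^ α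
            ≤ ∑ m ∈ Finset.range (N^K), p m ^ α := by
          rw [hsplit (fun m => p m ^ α)]; linarith
        have hlog := Real.log_le_log hX hle
        have hc : 0 ≤ 1/(α-1) := div_nonneg zero_le_one (by linarith)
        exact mul_le_mul_of_nonneg_left hlog hc
    linarith
  · -- evaluation at tscOpt
    rw [renyiDiv, hsplit (fun m => tscOpt N K D m ^ α), hsum1', hsum2',
      renyi_eval' (N^K) hMpos α hα1 _ hX, hlogM]
end

section
/- If 1 ≤ D < Σ_{k=0}^{K-1} N^{-k}, then N·(N−1)(D−1)/(N^K−N) < 1−(N−1)(D−1); consequently there is no feasible distribution p for the symmetric TSC scheme with p_m = (N−1)(D−1)/(N^K−N) for all m ∈ {N+1,…,N^K} and 0 ≤ p_m ≤ (N−1)(D−1)/(N^K−N) for all m ∈ {1,…,N}. -/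
open Finset Real

/-!
Since `(N - 1) ∑_{k<K} N⁻ᵏ = N - N^{1-K}`, the bound on `D` says that `a := (N - 1)(D - 1)`
satisfies `a N^K < N^K - N`, which is the first inequality with denominators cleared.
A distribution as in the second claim would be at most `c := a / (N^K - N)` on all `N^K`
options, so `1 = ∑ p ≤ N^K c = N c + a < 1`.
-/

theorem sub_one_mul_sum_inv_pow {x : ℝ} (hx : x ≠ 0) (K : ℕ) :
    (x - 1) * ∑ k ∈ range K, (x ^ k)⁻¹ = x - x / x ^ K := by
  have hgeom := geom_sum_mul x⁻¹ K
  simp only [← inv_pow]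
  have hxinv : x * x⁻¹ = 1 := mul_inv_cancel₀ hx
  rw [div_eq_mul_inv, ← inv_pow]
  linear_combination (-x) * hgeom + (∑ i ∈ range K, x⁻¹ ^ i) * hxinv

theorem sub_one_mul_sub_one_mul_pow_lt {x D : ℝ} (hx : 1 < x) {K : ℕ}
    (hD : D < ∑ k ∈ range K, (x ^ k)⁻¹) :
    (x - 1) * (D - 1) * x ^ K < x ^ K - x := by
  have hxK : 0 < x ^ K := by positivity
  have hlt : (x - 1) * (D - 1) < 1 - x / x ^ K := by
    have := mul_lt_mul_of_pos_left hD (sub_pos.mpr hx)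
    rw [sub_one_mul_sum_inv_pow (by positivity) K] at this
    linarith
  calc (x - 1) * (D - 1) * x ^ K < (1 - x / x ^ K) * x ^ K := by gcongr
    _ = x ^ K - x := by field_simp

theorem tsc_wrong_support_general (N K : ℕ) (hN : 2 ≤ N) (hK : 2 ≤ K) (D : ℝ)
    (hD2 : D < ∑ k ∈ Finset.range K, ((N : ℝ) ^ k)⁻¹) :
    (N : ℝ) * (((N : ℝ) - 1) * (D - 1) / ((N : ℝ) ^ K - N)) <
      1 - ((N : ℝ) - 1) * (D - 1) ∧
    ¬ ∃ p : ℕ → ℝ, TSCFeasible N K D p ∧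
        (∀ m ∈ Finset.Ico N (N ^ K),
          p m = ((N : ℝ) - 1) * (D - 1) / ((N : ℝ) ^ K - N)) ∧
        (∀ m ∈ Finset.range N,
          0 ≤ p m ∧ p m ≤ ((N : ℝ) - 1) * (D - 1) / ((N : ℝ) ^ K - N)) := by
  set a := ((N : ℝ) - 1) * (D - 1)
  set c := a / ((N : ℝ) ^ K - N)
  have hden : (0 : ℝ) < (N : ℝ) ^ K - N := by
    have : N < N ^ K := lt_self_pow₀ (by omega) (by omega)
    rw [sub_pos]
    exact_mod_cast this
  have hkey : a * (N : ℝ) ^ K < (N : ℝ) ^ K - N :=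
    sub_one_mul_sub_one_mul_pow_lt (by exact_mod_cast hN) hD2
  have hc : ((N : ℝ) ^ K - N) * c = a := mul_div_cancel₀ a hden.ne'
  have hfirst : (N : ℝ) * c < 1 - a := by
    rw [← mul_div_assoc, div_lt_iff₀ hden]
    linarith
  refine ⟨hfirst, ?_⟩
  rintro ⟨p, ⟨-, hsum, -⟩, htail, hhead⟩
  have hle : ∀ m ∈ range (N ^ K), p m ≤ c := by
    intro m hm
    by_cases hmN : m < N
    · exact (hhead m (mem_range.mpr hmN)).2
    · exact (htail m (mem_Ico.mpr ⟨not_lt.mp hmN, mem_range.mp hm⟩)).le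
  have htotal : (1 : ℝ) ≤ (N : ℝ) ^ K * c := by
    simpa [hsum] using sum_le_card_nsmul _ _ _ hle
  linarith

/-- if `1 ≤ D < ∑_{k<K} N^{-k}`, then
`N (N-1)(D-1)/(N^K-N) < 1-(N-1)(D-1)`; consequently there is no feasible distribution
for the symmetric TSC scheme equal to `(N-1)(D-1)/(N^K-N)` on the last `N^K-N` options
and at most that value on the first `N` options. -/
theorem tsc_wrong_support (N K : ℕ) (hN : 2 ≤ N) (hK : 2 ≤ K) (D : ℝ)
    (hD1 : 1 ≤ D) (hD2 : D < ∑ k ∈ Finset.range K, ((N : ℝ) ^ k)⁻¹) :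
    (N : ℝ) * (((N : ℝ) - 1) * (D - 1) / ((N : ℝ) ^ K - N)) <
      1 - ((N : ℝ) - 1) * (D - 1) ∧
    ¬ ∃ p : ℕ → ℝ, TSCFeasible N K D p ∧
        (∀ m ∈ Finset.Ico N (N ^ K),
          p m = ((N : ℝ) - 1) * (D - 1) / ((N : ℝ) ^ K - N)) ∧
        (∀ m ∈ Finset.range N,
          0 ≤ p m ∧ p m ≤ ((N : ℝ) - 1) * (D - 1) / ((N : ℝ) ^ K - N)) :=
  tsc_wrong_support_general N K hN hK D hD2
end

section
/- For every real α ∈ (0,∞) with α ≠ 1 and every feasible distribution p for the alternative PIR scheme, one has Σ_{m=1}^{M} p_m^α ≥ Σ_{m=1}^{M} (q*_m)^α if α > 1 and Σ_{m=1}^{M} p_m^α ≤ Σ_{m=1}^{M} (q*_m)^α if 0 < α < 1; consequently q* minimizes the Rényi divergence D_α(p‖U) of order α from the uniform distribution among all feasible distributions of the alternative scheme. -/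
open Finset Real

lemma jensen_convex_block {a : ℝ} (ha : 1 ≤ a) (s : Finset ℕ) (p : ℕ → ℝ)
    (hp : ∀ m ∈ s, 0 ≤ p m) :
    (s.card : ℝ) * ((∑ m ∈ s, p m) / s.card) ^ a ≤ ∑ m ∈ s, p m ^ a := by
  rcases s.eq_empty_or_nonempty with rfl | hs
  · simp
  · have hn : (0:ℝ) < s.card := by exact_mod_cast hs.card_pos
    have h := (convexOn_rpow ha).map_sum_le (t := s) (w := fun _ => (s.card:ℝ)⁻¹) (p := p)
      (fun i _ => by positivity) (by simp [mul_inv_cancel₀ hn.ne']) (fun i hi => hp i hi)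
    simp only [smul_eq_mul, ← Finset.mul_sum] at h
    have h2 : ((∑ m ∈ s, p m) / s.card) ^ a ≤ (s.card:ℝ)⁻¹ * ∑ m ∈ s, p m ^ a := by
      rw [div_eq_inv_mul]; exact h
    calc (s.card : ℝ) * ((∑ m ∈ s, p m) / s.card) ^ a
        ≤ (s.card : ℝ) * ((s.card:ℝ)⁻¹ * ∑ m ∈ s, p m ^ a) :=
          mul_le_mul_of_nonneg_left h2 hn.le
      _ = ∑ m ∈ s, p m ^ a := by field_simp

lemma jensen_concave_block {a : ℝ} (ha0 : 0 < a) (ha1 : a ≤ 1) (s : Finset ℕ) (p : ℕ → ℝ)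
    (hp : ∀ m ∈ s, 0 ≤ p m) :
    (∑ m ∈ s, p m ^ a) ≤ (s.card : ℝ) * ((∑ m ∈ s, p m) / s.card) ^ a := by
  rcases s.eq_empty_or_nonempty with rfl | hs
  · simp
  · have hn : (0:ℝ) < s.card := by exact_mod_cast hs.card_pos
    have h := (Real.concaveOn_rpow ha0.le ha1).le_map_sum (t := s)
      (w := fun _ => (s.card:ℝ)⁻¹) (p := p)
      (fun i _ => by positivity) (by simp [mul_inv_cancel₀ hn.ne']) (fun i hi => hp i hi)
    simp only [smul_eq_mul, ← Finset.mul_sum] at h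
    have h2 : (s.card:ℝ)⁻¹ * ∑ m ∈ s, p m ^ a ≤ ((∑ m ∈ s, p m) / s.card) ^ a := by
      rw [div_eq_inv_mul]; exact h
    calc (∑ m ∈ s, p m ^ a) = (s.card : ℝ) * ((s.card:ℝ)⁻¹ * ∑ m ∈ s, p m ^ a) := by field_simp
      _ ≤ (s.card : ℝ) * ((∑ m ∈ s, p m) / s.card) ^ a :=
          mul_le_mul_of_nonneg_left h2 hn.le

/-- for every order `α ∈ (0,∞)`, `α ≠ 1`, and every feasible `p` for the
alternative PIR scheme, `∑ pₘ^α ≥ ∑ q*ₘ^α` if `α > 1` and `∑ pₘ^α ≤ ∑ q*ₘ^α` if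
`0 < α < 1`; consequently `q*` minimizes the order-`α` Rényi divergence from uniform
among feasible distributions of the alternative scheme. -/
theorem alt_renyi_min (N K L : ℕ) (hN : 3 ≤ N) (hK : 2 ≤ K)
    (hL1 : 1 ≤ L) (hL2 : L ≤ N - 2) (D : ℝ)
    (hD1 : 1 ≤ D) (hD2 : D ≤ ∑ k ∈ Finset.range K, ((N : ℝ) ^ k)⁻¹)
    (α : ℝ) (hα0 : 0 < α) (hα1 : α ≠ 1)
    (p : ℕ → ℝ) (hp : AltFeasible N K L D p) :
    (1 < α →
      (∑ m ∈ Finset.range (N * (L + 1) ^ (K - 1)), altOpt N K L D m ^ α) ≤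
        ∑ m ∈ Finset.range (N * (L + 1) ^ (K - 1)), p m ^ α) ∧
    (α < 1 →
      (∑ m ∈ Finset.range (N * (L + 1) ^ (K - 1)), p m ^ α) ≤
        ∑ m ∈ Finset.range (N * (L + 1) ^ (K - 1)), altOpt N K L D m ^ α) ∧
    renyiDiv (N * (L + 1) ^ (K - 1)) α (altOpt N K L D) ≤
      renyiDiv (N * (L + 1) ^ (K - 1)) α p := by
  obtain ⟨hp0, hp1, hp2⟩ := hp
  set M := N * (L + 1) ^ (K - 1) with hM
  have hLexp : 2 ≤ (L + 1) ^ (K - 1) := by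
    have h1 : 2 ^ 1 ≤ 2 ^ (K - 1) := Nat.pow_le_pow_right (by omega) (by omega)
    have h2 : 2 ^ (K - 1) ≤ (L + 1) ^ (K - 1) := Nat.pow_le_pow_left (by omega) _
    omega
  have hNM : N < M := by
    have h0 : 0 < N := by omega
    calc N = N * 1 := (Nat.mul_one N).symm
    _ < N * (L + 1) ^ (K - 1) := Nat.mul_lt_mul_of_pos_left (by omega) h0
  have hNM' : N ≤ M := hNM.le
  have hsplit : ∀ f : ℕ → ℝ, ∑ m ∈ Finset.range M, f m
      = (∑ m ∈ Finset.range N, f m) + ∑ m ∈ Finset.Ico N M, f m := by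
    intro f
    simp only [Finset.range_eq_Ico]
    exact (Finset.sum_Ico_consecutive f (Nat.zero_le N) hNM').symm
  set S1 := ∑ m ∈ Finset.range N, p m with hS1
  set S2 := ∑ m ∈ Finset.Ico N M, p m with hS2
  have hS1nn : 0 ≤ S1 :=
    Finset.sum_nonneg fun m hm => hp0 m (Finset.mem_range.mpr
      (lt_of_lt_of_le (Finset.mem_range.mp hm) hNM'))
  have hS2nn : 0 ≤ S2 :=
    Finset.sum_nonneg fun m hm => hp0 m (Finset.mem_range.mpr (Finset.mem_Ico.mp hm).2)
  have hSsum : S1 + S2 = 1 := by rw [hS1, hS2, ← hsplit]; exact hp1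
  have hLpos : (0:ℝ) < L := by exact_mod_cast hL1
  have hcost : ∑ m ∈ Finset.range M, p m * altCost N L m = (L:ℝ) * S1 + ((L:ℝ)+1) * S2 := by
    rw [hsplit]
    have e1 : ∑ m ∈ Finset.range N, p m * altCost N L m = (L:ℝ) * S1 := by
      rw [hS1, Finset.mul_sum]
      refine Finset.sum_congr rfl fun m hm => ?_
      rw [altCost, if_pos (Finset.mem_range.mp hm), mul_comm]
    have e2 : ∑ m ∈ Finset.Ico N M, p m * altCost N L m = ((L:ℝ)+1) * S2 := by
      rw [hS2, Finset.mul_sum]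
      refine Finset.sum_congr rfl fun m hm => ?_
      rw [altCost, if_neg (not_lt.mpr (Finset.mem_Ico.mp hm).1), mul_comm]
    rw [e1, e2]
  have hS2eq : S2 = (L:ℝ) * (D - 1) := by
    rw [hcost] at hp2
    have : (L:ℝ) * S1 + ((L:ℝ)+1) * S2 = (L:ℝ) * D := by
      field_simp at hp2; linarith [hp2]
    nlinarith [hSsum]
  have hS1eq : S1 = 1 - (L:ℝ) * (D - 1) := by linarith [hSsum, hS2eq]
  -- cast facts
  have hMcast : ((M:ℕ):ℝ) = (N:ℝ) * ((L:ℝ) + 1) ^ (K - 1) := by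
    rw [hM]; push_cast; ring
  have hNr : (0:ℝ) < N := by exact_mod_cast (by omega : 0 < N)
  have hMNr : (0:ℝ) < (M:ℝ) - N := by
    have : (N:ℝ) < M := by exact_mod_cast hNM
    linarith
  have hcard2 : ((Finset.Ico N M).card : ℝ) = (M:ℝ) - N := by
    rw [Nat.card_Ico]; push_cast [Nat.cast_sub hNM']; ring
  -- q* values
  have hq1 : ∀ m ∈ Finset.range N, altOpt N K L D m = S1 / N := by
    intro m hm
    rw [altOpt, if_pos (Finset.mem_range.mp hm), hS1eq]
  have hq2 : ∀ m ∈ Finset.Ico N M, altOpt N K L D m = S2 / ((M:ℝ) - N) := by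
    intro m hm
    rw [altOpt, if_neg (not_lt.mpr (Finset.mem_Ico.mp hm).1), hS2eq, hMcast]
  have hqsum : ∑ m ∈ Finset.range M, altOpt N K L D m ^ α
      = (N:ℝ) * (S1 / N) ^ α + ((M:ℝ) - N) * (S2 / ((M:ℝ) - N)) ^ α := by
    rw [hsplit]
    congr 1
    · rw [Finset.sum_congr rfl fun m hm => by rw [hq1 m hm], Finset.sum_const,
        nsmul_eq_mul, Finset.card_range]
    · rw [Finset.sum_congr rfl fun m hm => by rw [hq2 m hm], Finset.sum_const,
        nsmul_eq_mul, hcard2]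
  -- rewrite Jensen bounds using cards
  have hcard1 : ((Finset.range N).card : ℝ) = (N:ℝ) := by simp
  have key1 : 1 < α → (∑ m ∈ Finset.range M, altOpt N K L D m ^ α)
      ≤ ∑ m ∈ Finset.range M, p m ^ α := by
    intro ha
    rw [hqsum, hsplit (fun m => p m ^ α)]
    have j1 := jensen_convex_block ha.le (Finset.range N) p
      (fun m hm => hp0 m (Finset.mem_range.mpr (lt_of_lt_of_le (Finset.mem_range.mp hm) hNM')))
    have j2 := jensen_convex_block ha.le (Finset.Ico N M) p
      (fun m hm => hp0 m (Finset.mem_range.mpr (Finset.mem_Ico.mp hm).2))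
    rw [hcard1, ← hS1] at j1
    rw [hcard2, ← hS2] at j2
    linarith
  have key2 : α < 1 → (∑ m ∈ Finset.range M, p m ^ α)
      ≤ ∑ m ∈ Finset.range M, altOpt N K L D m ^ α := by
    intro ha
    rw [hqsum, hsplit (fun m => p m ^ α)]
    have j1 := jensen_concave_block hα0 ha.le (Finset.range N) p
      (fun m hm => hp0 m (Finset.mem_range.mpr (lt_of_lt_of_le (Finset.mem_range.mp hm) hNM')))
    have j2 := jensen_concave_block hα0 ha.le (Finset.Ico N M) p
      (fun m hm => hp0 m (Finset.mem_range.mpr (Finset.mem_Ico.mp hm).2))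
    rw [hcard1, ← hS1] at j1
    rw [hcard2, ← hS2] at j2
    linarith
  -- positivity of sums
  have hqpos : 0 < ∑ m ∈ Finset.range M, altOpt N K L D m ^ α := by
    rw [hqsum]
    rcases lt_or_eq_of_le hS1nn with h1 | h1
    · have : 0 < (N:ℝ) * (S1 / N) ^ α :=
        mul_pos hNr (Real.rpow_pos_of_pos (div_pos h1 hNr) α)
      have h2 : 0 ≤ ((M:ℝ) - N) * (S2 / ((M:ℝ) - N)) ^ α := by positivity
      linarith
    · have hS2p : 0 < S2 := by rw [← h1] at hSsum; linarith
      have : 0 < ((M:ℝ) - N) * (S2 / ((M:ℝ) - N)) ^ α :=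
        mul_pos hMNr (Real.rpow_pos_of_pos (div_pos hS2p hMNr) α)
      have h2 : 0 ≤ (N:ℝ) * (S1 / N) ^ α := by positivity
      linarith
  have hppos : 0 < ∑ m ∈ Finset.range M, p m ^ α := by
    obtain ⟨m, hm, hpm⟩ : ∃ m ∈ Finset.range M, 0 < p m := by
      by_contra h
      push_neg at h
      have : (∑ m ∈ Finset.range M, p m) ≤ 0 := Finset.sum_nonpos h
      linarith [hp1.symm ▸ this]
    exact Finset.sum_pos' (fun i hi => Real.rpow_nonneg (hp0 i hi) α)
      ⟨m, hm, Real.rpow_pos_of_pos hpm α⟩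
  have hMpowpos : 0 < ((M:ℕ):ℝ) ^ (α - 1) :=
    Real.rpow_pos_of_pos (by exact_mod_cast (by omega : 0 < M)) _
  refine ⟨key1, key2, ?_⟩
  rw [renyiDiv, renyiDiv]
  rcases lt_or_gt_of_ne hα1 with ha | ha
  · -- α < 1 : factor 1/(α-1) < 0, log q ≥ log p
    have hfac : 1 / (α - 1) < 0 := by
      apply div_neg_of_pos_of_neg one_pos; linarith
    have hlog : Real.log (((M:ℕ):ℝ) ^ (α - 1) * ∑ m ∈ Finset.range M, p m ^ α)
        ≤ Real.log (((M:ℕ):ℝ) ^ (α - 1) * ∑ m ∈ Finset.range M, altOpt N K L D m ^ α) := by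
      apply Real.log_le_log (by positivity)
      exact mul_le_mul_of_nonneg_left (key2 ha) hMpowpos.le
    exact mul_le_mul_of_nonpos_left hlog hfac.le
  · have hfac : 0 < 1 / (α - 1) := by
      apply div_pos one_pos; linarith
    have hlog : Real.log (((M:ℕ):ℝ) ^ (α - 1) * ∑ m ∈ Finset.range M, altOpt N K L D m ^ α)
        ≤ Real.log (((M:ℕ):ℝ) ^ (α - 1) * ∑ m ∈ Finset.range M, p m ^ α) := by
      apply Real.log_le_log (by positivity)
      exact mul_le_mul_of_nonneg_left (key1 ha) hMpowpos.le
    exact mul_le_mul_of_nonneg_left hlog hfac.le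
end

section
/- For every feasible distribution p for the alternative PIR scheme, one has Σ_{m=1}^{M} p_m log p_m ≥ Σ_{m=1}^{M} q*_m log q*_m (with the convention 0·log 0 = 0); consequently q* minimizes the Kullback–Leibler divergence Σ_m p_m log(M p_m) from the uniform distribution among all feasible distributions of the alternative scheme. -/
open Finset Real

lemma gibbs_term' {p q : ℝ} (hp : 0 ≤ p) (hq : 0 ≤ q) (hpq : q = 0 → p = 0) :
    p * Real.log q + (p - q) ≤ p * Real.log p := by
  rcases eq_or_lt_of_le hq with hq0 | hq0
  · have hp0 := hpq hq0.symm
    simp [hp0, ← hq0]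
  rcases eq_or_lt_of_le hp with hp0 | hp0
  · simp [← hp0]; linarith
  have h1 : Real.log (q / p) ≤ q / p - 1 := Real.log_le_sub_one_of_pos (div_pos hq0 hp0)
  rw [Real.log_div hq0.ne' hp0.ne'] at h1
  have h2 := mul_le_mul_of_nonneg_left h1 hp0.le
  have h3 : p * (q / p - 1) = q - p := by field_simp
  nlinarith

lemma shift_log {c : ℝ} (x : ℝ) (hc : c ≠ 0) :
    x * Real.log (c * x) = x * Real.log x + x * Real.log c := by
  rcases eq_or_ne x 0 with rfl | hx
  · simp
  · rw [Real.log_mul hc hx]; ring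

set_option maxHeartbeats 1000000 in
/-- every feasible `p` for the alternative PIR scheme satisfies
`∑ pₘ log pₘ ≥ ∑ q*ₘ log q*ₘ`; consequently `q*` minimizes the KL divergence
`∑ pₘ log (M pₘ)` from uniform among feasible distributions of the alternative scheme. -/
theorem alt_kl_min (N K L : ℕ) (hN : 3 ≤ N) (hK : 2 ≤ K)
    (hL1 : 1 ≤ L) (hL2 : L ≤ N - 2) (D : ℝ)
    (hD1 : 1 ≤ D) (hD2 : D ≤ ∑ k ∈ Finset.range K, ((N : ℝ) ^ k)⁻¹)
    (p : ℕ → ℝ) (hp : AltFeasible N K L D p) :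
    (∑ m ∈ Finset.range (N * (L + 1) ^ (K - 1)),
        altOpt N K L D m * Real.log (altOpt N K L D m)) ≤
      (∑ m ∈ Finset.range (N * (L + 1) ^ (K - 1)), p m * Real.log (p m)) ∧
    klDivUnif (N * (L + 1) ^ (K - 1)) (altOpt N K L D) ≤
      klDivUnif (N * (L + 1) ^ (K - 1)) p := by
  obtain ⟨hpos, hsum, hcost⟩ := hp
  set M := N * (L + 1) ^ (K - 1) with hMdef
  -- basic positivity facts
  have hN0 : (0:ℝ) < N := by positivity
  have hNne : (N:ℝ) ≠ 0 := hN0.ne'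
  have hL0 : (0:ℝ) < L := by exact_mod_cast hL1
  have hLne : (L:ℝ) ≠ 0 := hL0.ne'
  have hK1 : 1 ≤ K - 1 := by omega
  have hpow : 1 < (L + 1) ^ (K - 1) := by
    calc 1 < 2 ^ 1 := by norm_num
    _ ≤ (L + 1) ^ (K - 1) := Nat.pow_le_pow_left (by omega) 1 |>.trans
        (Nat.pow_le_pow_right (by omega) hK1)
  have hNM : N < M := by
    have h := Nat.mul_lt_mul_of_pos_left hpow (show 0 < N by omega)
    rw [mul_one] at h
    exact h
  have hsub : Finset.range N ⊆ Finset.range M := Finset.range_subset_range.mpr hNM.le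
  -- denominator
  set denom : ℝ := (N : ℝ) * ((L : ℝ) + 1) ^ (K - 1) - (N : ℝ) with hdenomdef
  have hMcast : ((M : ℕ) : ℝ) = (N : ℝ) * ((L : ℝ) + 1) ^ (K - 1) := by
    rw [hMdef]; push_cast; ring
  have hdenom : (0:ℝ) < denom := by
    rw [hdenomdef, ← hMcast]
    have : (N:ℝ) < (M:ℝ) := by exact_mod_cast hNM
    linarith
  -- geometric sum bound : L * (D - 1) < 1
  have hDm1 : 0 ≤ D - 1 := by linarith
  have hLD1 : (L:ℝ) * (D - 1) < 1 := by
    set r : ℝ := (N:ℝ)⁻¹ with hrdef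
    have hr0 : 0 < r := by positivity
    have hNr : (N:ℝ) * r = 1 := mul_inv_cancel₀ hNne
    have hgs := geom_sum_mul r K
    have hS : ∑ k ∈ Finset.range K, ((N : ℝ) ^ k)⁻¹ = ∑ k ∈ Finset.range K, r ^ k := by
      simp [hrdef, inv_pow]
    rw [hS] at hD2
    set S : ℝ := ∑ k ∈ Finset.range K, r ^ k with hSdef
    have h1 : (1 - r) * S = 1 - r ^ K := by linear_combination (-1 : ℝ) * hgs
    have h2 : ((N:ℝ) - 1) * S = (N:ℝ) * (1 - r ^ K) := by
      have : ((N:ℝ) - 1) = (N:ℝ) * (1 - r) := by rw [mul_sub, hNr]; ring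
      rw [this, mul_assoc, h1]
    have hrK : 0 < r ^ K := pow_pos hr0 K
    have hN3 : (3:ℝ) ≤ N := by exact_mod_cast hN
    have hND : ((N:ℝ) - 1) * (D - 1) < 1 := by nlinarith
    have hLN2 : (L:ℝ) ≤ (N:ℝ) - 2 := by
      have : (L:ℕ) ≤ N - 2 := hL2
      have h := (Nat.cast_le (α := ℝ)).mpr this
      rw [Nat.cast_sub (by omega)] at h
      push_cast at h ⊢
      linarith
    nlinarith
  -- block structure
  have hsplit : ∀ f : ℕ → ℝ, ∑ m ∈ Finset.range M, f m
      = ∑ m ∈ Finset.range N, f m + ∑ m ∈ Finset.range M \ Finset.range N, f m := by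
    intro f
    rw [← Finset.sum_sdiff hsub]
    ring
  have hcard2 : (Finset.range M \ Finset.range N).card = M - N := by
    rw [Finset.card_sdiff_of_subset hsub, Finset.card_range, Finset.card_range]
  have hcard2' : ((M - N : ℕ) : ℝ) = denom := by
    rw [Nat.cast_sub hNM.le, hMcast, hdenomdef]
  -- block sums of p
  set A : ℝ := ∑ m ∈ Finset.range N, p m with hAdef
  set B : ℝ := ∑ m ∈ Finset.range M \ Finset.range N, p m with hBdef
  have hAB : A + B = 1 := by rw [hAdef, hBdef, ← hsplit]; exact hsum
  have hcost' : ∑ m ∈ Finset.range M, p m * altCost N L m = (L:ℝ) * D := by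
    field_simp at hcost
    linarith [hcost]
  have hT : ∑ m ∈ Finset.range M, p m * altCost N L m = (L:ℝ) * A + ((L:ℝ) + 1) * B := by
    rw [hsplit]
    congr 1
    · rw [hAdef, Finset.mul_sum]
      apply Finset.sum_congr rfl
      intro m hm
      rw [altCost, if_pos (Finset.mem_range.mp hm)]
      ring
    · rw [hBdef, Finset.mul_sum]
      apply Finset.sum_congr rfl
      intro m hm
      have : ¬ m < N := by
        have := (Finset.mem_sdiff.mp hm).2
        simpa using this
      rw [altCost, if_neg this]
      ring
  have hB : B = (L:ℝ) * (D - 1) := by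
    rw [hT] at hcost'
    nlinarith [hAB, hcost']
  have hA : A = 1 - (L:ℝ) * (D - 1) := by linarith
  -- the two values of q*
  set q1 : ℝ := (1 - (L : ℝ) * (D - 1)) / N with hq1def
  set q2 : ℝ := (L : ℝ) * (D - 1) / denom with hq2def
  have hq1pos : 0 < q1 := by
    rw [hq1def]; apply div_pos; linarith; exact hN0
  have hq2nonneg : 0 ≤ q2 := by
    rw [hq2def]; positivity
  have hNq1 : (N:ℝ) * q1 = A := by
    rw [hq1def, hA, mul_comm, div_mul_cancel₀ _ hNne]
  have hdq2 : denom * q2 = B := by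
    rw [hq2def, hB, mul_comm, div_mul_cancel₀ _ hdenom.ne']
  -- if q2 = 0 then p vanishes on the second block
  have hq2zero : q2 = 0 → ∀ m ∈ Finset.range M \ Finset.range N, p m = 0 := by
    intro h0
    have hB0 : B = 0 := by rw [← hdq2, h0, mul_zero]
    intro m hm
    have hnn : ∀ m ∈ Finset.range M \ Finset.range N, 0 ≤ p m := fun m hm =>
      hpos m (Finset.mem_sdiff.mp hm).1
    exact (Finset.sum_eq_zero_iff_of_nonneg hnn).mp hB0 m hm
  -- values of altOpt
  have hopt1 : ∀ m ∈ Finset.range N, altOpt N K L D m = q1 := by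
    intro m hm
    rw [altOpt, if_pos (Finset.mem_range.mp hm)]
  have hopt2 : ∀ m ∈ Finset.range M \ Finset.range N, altOpt N K L D m = q2 := by
    intro m hm
    have : ¬ m < N := by simpa using (Finset.mem_sdiff.mp hm).2
    rw [altOpt, if_neg this]
  -- Gibbs on block 1
  have g1 : A * Real.log q1 ≤ ∑ m ∈ Finset.range N, p m * Real.log (p m) := by
    have h := Finset.sum_le_sum (fun m hm =>
      gibbs_term' (hpos m (hsub hm)) hq1pos.le (fun h => absurd h hq1pos.ne'))
    calc A * Real.log q1
        = ∑ m ∈ Finset.range N, (p m * Real.log q1 + (p m - q1)) := by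
          rw [Finset.sum_add_distrib, Finset.sum_sub_distrib, ← Finset.sum_mul,
            Finset.sum_const, Finset.card_range, ← hAdef, nsmul_eq_mul, hNq1]
          ring
      _ ≤ _ := h
  -- Gibbs on block 2
  have g2 : B * Real.log q2 ≤ ∑ m ∈ Finset.range M \ Finset.range N, p m * Real.log (p m) := by
    have h := Finset.sum_le_sum (fun m hm =>
      gibbs_term' (hpos m (Finset.mem_sdiff.mp hm).1) hq2nonneg
        (fun h0 => hq2zero h0 m hm))
    calc B * Real.log q2
        = ∑ m ∈ Finset.range M \ Finset.range N, (p m * Real.log q2 + (p m - q2)) := by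
          rw [Finset.sum_add_distrib, Finset.sum_sub_distrib, ← Finset.sum_mul,
            Finset.sum_const, hcard2, ← hBdef, nsmul_eq_mul, hcard2', hdq2]
          ring
      _ ≤ _ := h
  -- value of the q* entropy sum
  have hqsum : ∑ m ∈ Finset.range M, altOpt N K L D m * Real.log (altOpt N K L D m)
      = A * Real.log q1 + B * Real.log q2 := by
    rw [hsplit]
    congr 1
    · rw [Finset.sum_congr rfl (fun m hm => by rw [hopt1 m hm]),
        Finset.sum_const, Finset.card_range, nsmul_eq_mul, ← mul_assoc, hNq1]
    · rw [Finset.sum_congr rfl (fun m hm => by rw [hopt2 m hm]),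
        Finset.sum_const, hcard2, nsmul_eq_mul, hcard2', ← mul_assoc, hdq2]
  -- q* sums to 1
  have hqsum1 : ∑ m ∈ Finset.range M, altOpt N K L D m = 1 := by
    rw [hsplit]
    rw [Finset.sum_congr rfl (fun m hm => hopt1 m hm), Finset.sum_const,
      Finset.card_range, nsmul_eq_mul, hNq1,
      Finset.sum_congr rfl (fun m hm => hopt2 m hm), Finset.sum_const,
      hcard2, nsmul_eq_mul, hcard2', hdq2]
    exact hAB
  -- first claim
  have main : ∑ m ∈ Finset.range M, altOpt N K L D m * Real.log (altOpt N K L D m)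
      ≤ ∑ m ∈ Finset.range M, p m * Real.log (p m) := by
    rw [hqsum, hsplit (fun m => p m * Real.log (p m))]
    exact add_le_add g1 g2
  refine ⟨main, ?_⟩
  -- KL divergence claim
  have hMne : ((M:ℕ):ℝ) ≠ 0 := by
    rw [hMcast]; positivity
  have hkl : ∀ f : ℕ → ℝ, (∑ m ∈ Finset.range M, f m = 1) →
      klDivUnif M f = (∑ m ∈ Finset.range M, f m * Real.log (f m)) + Real.log M := by
    intro f hf
    rw [klDivUnif]
    rw [Finset.sum_congr rfl (fun m _ => shift_log (f m) hMne)]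
    rw [Finset.sum_add_distrib, ← Finset.sum_mul, hf, one_mul]
  rw [hkl _ hqsum1, hkl _ hsum]
  linarith [main]
end

section
/- Let t = (1−L(D−1))/N. Every feasible distribution p for the alternative PIR scheme satisfies max_{m ∈ {1,…,M}} p_m ≥ t; moreover, every vector p with p_m = t for all m ∈ {1,…,N}, 0 ≤ p_m ≤ t for all m ∈ {N+1,…,M}, and Σ_{m=N+1}^{M} p_m = L(D−1), is a feasible distribution and satisfies max_m p_m = t, hence attains the minimum. -/
open Finset Real

/-- with `t = (1-L(D-1))/N`, every feasible `p` for the alternative PIR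
scheme satisfies `max_m pₘ ≥ t`; moreover every vector equal to `t` on the first `N`
options, between `0` and `t` on the remaining options, and with tail sum `L(D-1)`, is
feasible with `max_m pₘ = t`, hence attains the minimum. -/
theorem alt_max_characterization (N K L : ℕ) (hN : 3 ≤ N) (hK : 2 ≤ K)
    (hL1 : 1 ≤ L) (hL2 : L ≤ N - 2) (D : ℝ)
    (hD1 : 1 ≤ D) (hD2 : D ≤ ∑ k ∈ Finset.range K, ((N : ℝ) ^ k)⁻¹) :
    (∀ p : ℕ → ℝ, AltFeasible N K L D p →
      (1 - (L : ℝ) * (D - 1)) / N ≤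
        maxOver (N * (L + 1) ^ (K - 1))
          (Nat.mul_ne_zero (show N ≠ 0 by omega)
            (pow_ne_zero (K - 1) (show L + 1 ≠ 0 by omega))) p) ∧
    ∀ p : ℕ → ℝ,
      (∀ m ∈ Finset.range N, p m = (1 - (L : ℝ) * (D - 1)) / N) →
      (∀ m ∈ Finset.Ico N (N * (L + 1) ^ (K - 1)),
        0 ≤ p m ∧ p m ≤ (1 - (L : ℝ) * (D - 1)) / N) →
      (∑ m ∈ Finset.Ico N (N * (L + 1) ^ (K - 1)), p m = (L : ℝ) * (D - 1)) →
      AltFeasible N K L D p ∧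
      maxOver (N * (L + 1) ^ (K - 1))
          (Nat.mul_ne_zero (show N ≠ 0 by omega)
            (pow_ne_zero (K - 1) (show L + 1 ≠ 0 by omega))) p =
        (1 - (L : ℝ) * (D - 1)) / N := by
  classical
  set Mn := N * (L + 1) ^ (K - 1) with hMn
  have hNM : N ≤ Mn := Nat.le_mul_of_pos_right N (by positivity)
  have hNR : (3:ℝ) ≤ (N:ℝ) := by exact_mod_cast hN
  have hNne : (N:ℝ) ≠ 0 := by linarith
  have hLR : (L:ℝ) + 2 ≤ (N:ℝ) := by
    have h : L + 2 ≤ N := by omega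
    exact_mod_cast h
  have hL0 : (1:ℝ) ≤ (L:ℝ) := by exact_mod_cast hL1
  have hLne : (L:ℝ) ≠ 0 := by linarith
  -- geometric bound : D ≤ N/(N-1)
  have hrlt : (N:ℝ)⁻¹ < 1 := by
    rw [inv_lt_one_iff₀]; right; linarith
  have hgm := geom_sum_mul ((N:ℝ)⁻¹) K
  have hSle : ∑ k ∈ Finset.range K, ((N : ℝ) ^ k)⁻¹ ≤ (N:ℝ)/((N:ℝ)-1) := by
    have he : ∑ k ∈ Finset.range K, ((N : ℝ) ^ k)⁻¹
        = ∑ k ∈ Finset.range K, ((N:ℝ)⁻¹) ^ k := by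
      refine Finset.sum_congr rfl fun k _ => ?_
      rw [inv_pow]
    rw [he]
    have h1 : (0:ℝ) < 1 - (N:ℝ)⁻¹ := by linarith
    have h2 : (∑ k ∈ Finset.range K, ((N:ℝ)⁻¹) ^ k) * (1 - (N:ℝ)⁻¹)
        = 1 - ((N:ℝ)⁻¹) ^ K := by linear_combination -hgm
    have h3 : (∑ k ∈ Finset.range K, ((N:ℝ)⁻¹) ^ k) * (1 - (N:ℝ)⁻¹) ≤ 1 := by
      have : (0:ℝ) ≤ ((N:ℝ)⁻¹) ^ K := by positivity
      linarith
    have h4 : ∑ k ∈ Finset.range K, ((N:ℝ)⁻¹) ^ k ≤ 1 / (1 - (N:ℝ)⁻¹) :=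
      (le_div_iff₀ h1).mpr h3
    have h5 : 1 / (1 - (N:ℝ)⁻¹) = (N:ℝ)/((N:ℝ)-1) := by
      rw [show 1 - (N:ℝ)⁻¹ = ((N:ℝ)-1)/(N:ℝ) by field_simp, one_div_div]
    linarith [h4, h5.le, h5.ge]
  have hDle : D ≤ (N:ℝ)/((N:ℝ)-1) := hD2.trans hSle
  have hND : ((N:ℝ)-1) * (D-1) ≤ 1 := by
    have hpos : (0:ℝ) < (N:ℝ)-1 := by linarith
    have := (le_div_iff₀ hpos).mp hDle
    nlinarith
  have hLD1 : (L:ℝ) * (D - 1) ≤ 1 := by nlinarith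
  have hLD0 : (0:ℝ) ≤ (L:ℝ) * (D - 1) := by nlinarith
  have ht0 : (0:ℝ) ≤ (1 - (L : ℝ) * (D - 1)) / N := by
    apply div_nonneg <;> linarith
  have hcost1 : ∀ q : ℕ → ℝ, ∑ m ∈ Finset.range N, q m * altCost N L m
      = (∑ m ∈ Finset.range N, q m) * (L:ℝ) := by
    intro q
    rw [Finset.sum_mul]
    refine Finset.sum_congr rfl fun m hm => ?_
    rw [altCost, if_pos (Finset.mem_range.mp hm)]
  have hcost2 : ∀ q : ℕ → ℝ, ∑ m ∈ Finset.Ico N Mn, q m * altCost N L m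
      = (∑ m ∈ Finset.Ico N Mn, q m) * ((L:ℝ) + 1) := by
    intro q
    rw [Finset.sum_mul]
    refine Finset.sum_congr rfl fun m hm => ?_
    have hmN : N ≤ m := (Finset.mem_Ico.mp hm).1
    rw [altCost, if_neg (by omega)]
  constructor
  · rintro p ⟨hpos, hsum, hcost⟩
    have htot : ∑ m ∈ Finset.range Mn, p m * altCost N L m = (L:ℝ) * D := by
      field_simp at hcost
      linarith
    have hA : ∑ m ∈ Finset.range N, p m + ∑ m ∈ Finset.Ico N Mn, p m = 1 := by
      rw [Finset.sum_range_add_sum_Ico p hNM]; exact hsum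
    have hB : (∑ m ∈ Finset.range N, p m) * (L:ℝ)
        + (∑ m ∈ Finset.Ico N Mn, p m) * ((L:ℝ)+1) = (L:ℝ) * D := by
      rw [← hcost1, ← hcost2, Finset.sum_range_add_sum_Ico _ hNM]; exact htot
    have hS2 : ∑ m ∈ Finset.Ico N Mn, p m = (L:ℝ) * (D - 1) := by
      linear_combination hB - (L:ℝ) * hA
    have hS1 : ∑ m ∈ Finset.range N, p m = 1 - (L:ℝ) * (D - 1) := by linarith
    have hle : ∑ m ∈ Finset.range N, (1 - (L : ℝ) * (D - 1)) / N
        ≤ ∑ m ∈ Finset.range N, p m := by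
      rw [Finset.sum_const, Finset.card_range, nsmul_eq_mul, hS1,
        mul_div_cancel₀ _ hNne]
    obtain ⟨m, hm, hmle⟩ := Finset.exists_le_of_sum_le
      (Finset.nonempty_range_iff.mpr (by omega)) hle
    refine hmle.trans (Finset.le_sup' p ?_)
    exact Finset.mem_range.mpr (lt_of_lt_of_le (Finset.mem_range.mp hm) hNM)
  · intro p h1 h2 h3
    have hS1 : ∑ m ∈ Finset.range N, p m = 1 - (L:ℝ) * (D - 1) := by
      rw [Finset.sum_congr rfl h1, Finset.sum_const, Finset.card_range,
        nsmul_eq_mul, mul_div_cancel₀ _ hNne]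
    have hsum : ∑ m ∈ Finset.range Mn, p m = 1 := by
      rw [← Finset.sum_range_add_sum_Ico p hNM, hS1, h3]; ring
    refine ⟨⟨?_, hsum, ?_⟩, ?_⟩
    · intro m hm
      by_cases hmN : m < N
      · rw [h1 m (Finset.mem_range.mpr hmN)]; exact ht0
      · exact (h2 m (Finset.mem_Ico.mpr ⟨by omega, Finset.mem_range.mp hm⟩)).1
    · rw [← Finset.sum_range_add_sum_Ico (fun m => p m * altCost N L m) hNM,
        hcost1, hcost2, hS1, h3]
      field_simp
      ring
    · refine le_antisymm (Finset.sup'_le _ _ fun m hm => ?_) ?_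
      · by_cases hmN : m < N
        · exact (h1 m (Finset.mem_range.mpr hmN)).le
        · exact (h2 m (Finset.mem_Ico.mpr ⟨by omega, Finset.mem_range.mp hm⟩)).2
      · have h0 : (0:ℕ) ∈ Finset.range Mn := Finset.mem_range.mpr (by omega)
        calc (1 - (L : ℝ) * (D - 1)) / N = p 0 := (h1 0 (Finset.mem_range.mpr (by omega))).symm
          _ ≤ _ := Finset.le_sup' p h0
end
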